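/- Let 0 < α < 1, k₀₁ > 0, k > 0, and define q(t) = k₀₁·Γ(α)·t^α·E_{α,α+1}(-k·t^α) for t ≥ 0. Then q(0) = 0, q is differentiable on (0,∞), and q solves the one-compartment model with power-law infusion rate k₀₁·t^{α-1} and fractional elimination: for every t > 0, q'(t) = k₀₁·t^{α-1} - k · (1/Γ(α)) · ∫_0^t q'(τ)·(t-τ)^{α-1} dτ. -/

import Mathlib

/-- The two-parameter Mittag-Leffler function `E_{a,b}(z) = ∑_{k=0}^∞ z^k / Γ(a·k + b)`. -/
noncomputable def mittagLeffler (a b : ℝ) (z : ℝ) : ℝ :=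
  ∑' k : ℕ, z ^ k / Real.Gamma (a * k + b)

/-!
For `t > 0` put `g_β(t) = t^(β-1) E_{α,β}(c t^α) = ∑ cⁿ t^(αn+β-1) / Γ(αn+β)`. Term by term,
`g_{β+1}' = g_β` (because `Γ(p+1) = p Γ(p)`), the Beta integral gives
`∫₀ᵗ g_β(τ) (t-τ)^(γ-1) dτ = Γ(γ) g_{β+γ}(t)`, and splitting off the first term gives
`g_β(t) = t^(β-1) / Γ(β) + c g_{β+α}(t)`. For `q = k₀₁ Γ(α) g_{α+1}` with `c = -k`, these three
identities with `β = γ = α` combine into the equation for `q'`. The termwise operations are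
justified because log-convexity of `Γ` gives `Γ(x+α) ≥ (x-1)^α Γ(x)`, so `∑ zⁿ / Γ(αn+β)`
converges for every `z`.
-/

open Real MeasureTheory Set Filter

namespace Complex

lemma betaIntegrand_eq_ofReal {a b x : ℝ} (hx : x ∈ Icc 0 1) :
    (x : ℂ) ^ ((a : ℂ) - 1) * (1 - (x : ℂ)) ^ ((b : ℂ) - 1)
      = ((x ^ (a - 1) * (1 - x) ^ (b - 1) : ℝ) : ℂ) := by
  push_cast [ofReal_cpow hx.1, ofReal_cpow (sub_nonneg.2 hx.2)]
  rfl

lemma betaIntegral_ofReal (a b : ℝ) :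
    betaIntegral a b = ↑(∫ x in (0 : ℝ)..1, x ^ (a - 1) * (1 - x) ^ (b - 1)) := by
  rw [betaIntegral, ← intervalIntegral.integral_ofReal]
  exact intervalIntegral.integral_congr fun x hx =>
    betaIntegrand_eq_ofReal (by rwa [uIcc_of_le zero_le_one] at hx)

end Complex

namespace Real

lemma intervalIntegrable_rpow_mul_one_sub_rpow {a b : ℝ} (ha : 0 < a) (hb : 0 < b) :
    IntervalIntegrable (fun x : ℝ => x ^ (a - 1) * (1 - x) ^ (b - 1)) volume 0 1 := by
  have h := (Complex.betaIntegral_convergent (u := a) (v := b) (by simpa) (by simpa)).norm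
  rw [intervalIntegrable_iff_integrableOn_Ioc_of_le zero_le_one] at h ⊢
  refine h.congr_fun (fun x hx => ?_) measurableSet_Ioc
  have hx' : x ∈ Icc (0 : ℝ) 1 := Ioc_subset_Icc_self hx
  dsimp only
  rw [Complex.betaIntegrand_eq_ofReal hx', Complex.norm_real,
    norm_of_nonneg (mul_nonneg (rpow_nonneg hx'.1 _) (rpow_nonneg (sub_nonneg.2 hx'.2) _))]

lemma integral_rpow_mul_one_sub_rpow {a b : ℝ} (ha : 0 < a) (hb : 0 < b) :
    ∫ x in (0 : ℝ)..1, x ^ (a - 1) * (1 - x) ^ (b - 1) = Gamma a * Gamma b / Gamma (a + b) := by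
  have h := Complex.Gamma_mul_Gamma_eq_betaIntegral (s := a) (t := b) (by simpa) (by simpa)
  rw [Complex.betaIntegral_ofReal, ← Complex.ofReal_add, Complex.Gamma_ofReal, Complex.Gamma_ofReal,
    Complex.Gamma_ofReal, ← Complex.ofReal_mul, ← Complex.ofReal_mul, Complex.ofReal_inj] at h
  rw [h, mul_div_cancel_left₀ _ (Gamma_pos_of_pos (add_pos ha hb)).ne']

lemma rpow_mul_sub_rpow_eq {a b t τ : ℝ} (ht : 0 < t) (hτ : τ ∈ Icc 0 t) :
    τ ^ (a - 1) * (t - τ) ^ (b - 1)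
      = t ^ (a + b - 2) * ((τ / t) ^ (a - 1) * (1 - τ / t) ^ (b - 1)) := by
  rw [one_sub_div ht.ne', div_rpow hτ.1 ht.le, div_rpow (sub_nonneg.2 hτ.2) ht.le,
    show a + b - 2 = (a - 1) + (b - 1) by ring, rpow_add ht]
  field_simp

lemma intervalIntegrable_rpow_mul_sub_rpow {a b t : ℝ} (ha : 0 < a) (hb : 0 < b) (ht : 0 < t) :
    IntervalIntegrable (fun τ : ℝ => τ ^ (a - 1) * (t - τ) ^ (b - 1)) volume 0 t := by
  have h := ((intervalIntegrable_rpow_mul_one_sub_rpow ha hb).comp_mul_left (c := t⁻¹)).const_mul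
    (t ^ (a + b - 2))
  rw [zero_div, one_div, inv_inv] at h
  refine h.congr fun τ hτ => ?_
  rw [uIoc_of_le ht.le] at hτ
  rw [rpow_mul_sub_rpow_eq ht (Ioc_subset_Icc_self hτ), div_eq_inv_mul]

lemma integral_rpow_mul_sub_rpow {a b t : ℝ} (ha : 0 < a) (hb : 0 < b) (ht : 0 < t) :
    ∫ τ in (0 : ℝ)..t, τ ^ (a - 1) * (t - τ) ^ (b - 1)
      = Gamma a * Gamma b / Gamma (a + b) * t ^ (a + b - 1) := by
  have hscale := intervalIntegral.integral_comp_div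
    (fun x : ℝ => x ^ (a - 1) * (1 - x) ^ (b - 1)) (a := 0) (b := t) ht.ne'
  rw [zero_div, div_self ht.ne', integral_rpow_mul_one_sub_rpow ha hb] at hscale
  rw [intervalIntegral.integral_congr fun τ hτ =>
      rpow_mul_sub_rpow_eq ht (by rwa [uIcc_of_le ht.le] at hτ),
    intervalIntegral.integral_const_mul, hscale, smul_eq_mul,
    show a + b - 1 = (a + b - 2) + 1 by ring, rpow_add_one ht.ne']
  ring

lemma rpow_mul_Gamma_le_Gamma_add {x a : ℝ} (hx : 1 < x) (ha : 0 < a) :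
    (x - 1) ^ a * Gamma x ≤ Gamma (x + a) := by
  have hx1 : 0 < x - 1 := sub_pos.2 hx
  have hΓ : 0 < Gamma (x - 1) := Gamma_pos_of_pos hx1
  -- by log-convexity, the slope `log (x - 1)` of `log ∘ Gamma` on `[x - 1, x]` bounds its slope
  -- on `[x, x + a]`
  have hslope := convexOn_log_Gamma.slope_mono_adjacent (x := x - 1) (y := x) (z := x + a)
    hx1 (by simp only [mem_Ioi]; linarith) (by linarith) (by linarith)
  have hΓx : Gamma x = (x - 1) * Gamma (x - 1) := by
    simpa using Gamma_add_one hx1.ne'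
  simp only [Function.comp_apply, hΓx, log_mul hx1.ne' hΓ.ne', sub_sub_cancel, div_one,
    add_sub_cancel_left] at hslope
  rw [← log_le_log_iff (by positivity) (Gamma_pos_of_pos (by linarith)), log_mul (by positivity)
    (by positivity), log_rpow hx1, hΓx, log_mul hx1.ne' hΓ.ne']
  rw [le_div_iff₀ ha] at hslope
  linarith

lemma summable_pow_div_Gamma {α c : ℝ} (hα : 0 < α) (hc : 0 < c) (z : ℝ) :
    Summable fun n : ℕ => z ^ n / Gamma (α * n + c) := by
  refine summable_of_ratio_norm_eventually_le one_half_lt_one ?_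
  have hx : Tendsto (fun n : ℕ => α * n + c - 1) atTop atTop :=
    tendsto_atTop_add_const_right _ _
      ((tendsto_natCast_atTop_atTop.const_mul_atTop hα).atTop_add tendsto_const_nhds)
  filter_upwards [hx.eventually_gt_atTop 0,
    ((tendsto_rpow_atTop hα).comp hx).eventually_ge_atTop (2 * |z|)] with n hn hz
  set x := α * n + c
  have hΓ : 0 < Gamma x := Gamma_pos_of_pos (by positivity)
  have hgrowth : (x - 1) ^ α * Gamma x ≤ Gamma (x + α) :=
    rpow_mul_Gamma_le_Gamma_add (by linarith) hα
  have hΓα : 0 < Gamma (x + α) := Gamma_pos_of_pos (by linarith)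
  have hz : 2 * ‖z‖ ≤ (x - 1) ^ α := hz
  rw [Nat.cast_succ, show α * (n + 1 : ℝ) + c = x + α by ring, norm_div, norm_div, norm_pow,
    norm_pow, norm_of_nonneg hΓ.le, norm_of_nonneg hΓα.le, div_le_iff₀ hΓα]
  calc ‖z‖ ^ (n + 1) = ‖z‖ ^ n * ‖z‖ := pow_succ _ _
    _ ≤ ‖z‖ ^ n * ((x - 1) ^ α / 2) := by gcongr; linarith
    _ = 1 / 2 * (‖z‖ ^ n / Gamma x) * ((x - 1) ^ α * Gamma x) := by field_simp
    _ ≤ 1 / 2 * (‖z‖ ^ n / Gamma x) * Gamma (x + α) := by gcongr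

lemma rpow_le_rpow_add_rpow {a b s : ℝ} (ha : 0 < a) (hs : s ∈ Icc a b) (p : ℝ) :
    s ^ p ≤ a ^ p + b ^ p := by
  rcases le_total 0 p with hp | hp
  · linarith [rpow_le_rpow (ha.le.trans hs.1) hs.2 hp, rpow_nonneg ha.le p]
  · linarith [rpow_le_rpow_of_nonpos ha hs.1 hp, rpow_nonneg (ha.le.trans (hs.1.trans hs.2)) p]

lemma hasDerivAt_rpow_div_Gamma {p s : ℝ} (hp : 0 < p) (hs : 0 < s) :
    HasDerivAt (fun x => x ^ p / Gamma (p + 1)) (s ^ (p - 1) / Gamma p) s := by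
  refine ((hasDerivAt_rpow_const (p := p) (Or.inl hs.ne')).div_const (Gamma (p + 1))).congr_deriv ?_
  rw [Gamma_add_one hp.ne']
  field_simp [(Gamma_pos_of_pos hp).ne']

end Real

lemma mittagLeffler_eq_inv_Gamma_add_mul {α β : ℝ} (hα : 0 < α) (hβ : 0 < β) (z : ℝ) :
    mittagLeffler α β z = (Gamma β)⁻¹ + z * mittagLeffler α (β + α) z := by
  rw [mittagLeffler, (summable_pow_div_Gamma hα hβ z).tsum_eq_zero_add, mittagLeffler,
    ← tsum_mul_left]
  congr 1
  · simp
  · refine tsum_congr fun n => ?_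
    push_cast
    rw [pow_succ', mul_div_assoc]
    ring_nf

lemma hasSum_rpow_mul_mittagLeffler {α β : ℝ} (hα : 0 < α) (hβ : 0 < β) (c γ : ℝ) {t : ℝ}
    (ht : 0 < t) :
    HasSum (fun n : ℕ => c ^ n / Gamma (α * n + β) * t ^ (α * n + γ))
      (t ^ γ * mittagLeffler α β (c * t ^ α)) := by
  refine ((summable_pow_div_Gamma hα hβ (c * t ^ α)).hasSum.mul_left (t ^ γ)).congr_fun
    fun n => ?_
  rw [rpow_add ht, rpow_mul ht.le, rpow_natCast, mul_pow]
  ring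

lemma hasDerivAt_rpow_mul_mittagLeffler {α β : ℝ} (hα : 0 < α) (hβ : 0 < β) (c : ℝ) {t : ℝ}
    (ht : 0 < t) :
    HasDerivAt (fun s => s ^ β * mittagLeffler α (β + 1) (c * s ^ α))
      (t ^ (β - 1) * mittagLeffler α β (c * t ^ α)) t := by
  set f : ℕ → ℝ → ℝ := fun n s => c ^ n / Gamma (α * n + (β + 1)) * s ^ (α * n + β)
  set f' : ℕ → ℝ → ℝ := fun n s => c ^ n / Gamma (α * n + β) * s ^ (α * n + (β - 1))
  have hf : ∀ n, ∀ s ∈ Ioo (t / 2) (2 * t), HasDerivAt (f n) (f' n s) s := by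
    intro n s hs
    have hp : 0 < α * n + β := by positivity
    have hd := (hasDerivAt_rpow_div_Gamma hp ((half_pos ht).trans hs.1)).const_mul (c ^ n)
    simpa only [f, f', ← add_assoc, ← add_sub_assoc, div_mul_eq_mul_div, mul_div_assoc] using hd
  set u : ℕ → ℝ := fun n =>
    |c| ^ n / Gamma (α * n + β) * ((t / 2) ^ (α * n + (β - 1)) + (2 * t) ^ (α * n + (β - 1)))
  have hu : Summable u := by
    simp only [u, mul_add]
    exact (hasSum_rpow_mul_mittagLeffler hα hβ |c| (β - 1) (half_pos ht)).summable.add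
      (hasSum_rpow_mul_mittagLeffler hα hβ |c| (β - 1) (by positivity)).summable
  have hf'u : ∀ n, ∀ s ∈ Ioo (t / 2) (2 * t), ‖f' n s‖ ≤ u n := by
    intro n s hs
    have hΓ : 0 < Gamma (α * n + β) := Gamma_pos_of_pos (by positivity)
    simp only [f', u, norm_mul, norm_div, norm_pow, norm_of_nonneg hΓ.le, Real.norm_eq_abs]
    rw [abs_of_nonneg (rpow_nonneg (by linarith [hs.1]) _)]
    gcongr
    exact rpow_le_rpow_add_rpow (half_pos ht) (Ioo_subset_Icc_self hs) _
  have ht_mem : t ∈ Ioo (t / 2) (2 * t) := ⟨by linarith, by linarith⟩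
  have hsum := hasDerivAt_tsum_of_isPreconnected hu isOpen_Ioo isPreconnected_Ioo hf hf'u ht_mem
    (hasSum_rpow_mul_mittagLeffler hα (by linarith) c β ht).summable ht_mem
  rw [(hasSum_rpow_mul_mittagLeffler hα hβ c (β - 1) ht).tsum_eq] at hsum
  refine hsum.congr_of_eventuallyEq ?_
  filter_upwards [Ioi_mem_nhds ht] with s hs
  exact ((hasSum_rpow_mul_mittagLeffler hα (by linarith) c β hs).tsum_eq).symm

lemma integral_rpow_mul_mittagLeffler_mul_rpow {α β γ : ℝ} (hα : 0 < α) (hβ : 0 < β)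
    (hγ : 0 < γ) (c : ℝ) {t : ℝ} (ht : 0 < t) :
    ∫ τ in (0 : ℝ)..t, τ ^ (β - 1) * mittagLeffler α β (c * τ ^ α) * (t - τ) ^ (γ - 1)
      = Gamma γ * (t ^ (β + γ - 1) * mittagLeffler α (β + γ) (c * t ^ α)) := by
  set F : ℝ → ℕ → ℝ → ℝ := fun d n τ =>
    d ^ n / Gamma (α * n + β) * τ ^ (α * n + (β - 1)) * (t - τ) ^ (γ - 1)
  have hF_int : ∀ d n, IntegrableOn (F d n) (Ioc 0 t) := by
    intro d n
    have h := intervalIntegrable_rpow_mul_sub_rpow (a := α * n + β) (by positivity) hγ ht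
    rw [intervalIntegrable_iff_integrableOn_Ioc_of_le ht.le] at h
    simp only [F, mul_assoc, ← add_sub_assoc]
    exact h.const_mul _
  have hF_integral : ∀ d n, ∫ τ in Ioc 0 t, F d n τ
      = Gamma γ * (d ^ n / Gamma (α * n + (β + γ)) * t ^ (α * n + (β + γ - 1))) := by
    intro d n
    simp only [F, mul_assoc]
    rw [integral_const_mul, ← intervalIntegral.integral_of_le ht.le, ← add_sub_assoc,
      integral_rpow_mul_sub_rpow (by positivity) hγ ht]
    field_simp
    ring_nf
  have hF_norm : ∀ n, ∫ τ in Ioc 0 t, ‖F c n τ‖ = ∫ τ in Ioc 0 t, F |c| n τ := by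
    refine fun n => setIntegral_congr_fun measurableSet_Ioc fun τ hτ => ?_
    have hΓ : 0 < Gamma (α * n + β) := Gamma_pos_of_pos (by positivity)
    simp only [F, norm_mul, norm_div, norm_pow, Real.norm_eq_abs, abs_of_pos hΓ,
      abs_of_nonneg (rpow_nonneg hτ.1.le _), abs_of_nonneg (rpow_nonneg (sub_nonneg.2 hτ.2) _)]
  have hsum := hasSum_integral_of_summable_integral_norm (hF_int c) ?_
  · have hseries : EqOn (fun τ => ∑' n, F c n τ)
        (fun τ => τ ^ (β - 1) * mittagLeffler α β (c * τ ^ α) * (t - τ) ^ (γ - 1)) (Ioc 0 t) :=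
      fun τ hτ =>
        ((hasSum_rpow_mul_mittagLeffler hα hβ c (β - 1) hτ.1).mul_right ((t - τ) ^ (γ - 1))).tsum_eq
    rw [setIntegral_congr_fun measurableSet_Ioc hseries] at hsum
    simp only [hF_integral] at hsum
    rw [intervalIntegral.integral_of_le ht.le]
    exact hsum.unique ((hasSum_rpow_mul_mittagLeffler hα (add_pos hβ hγ) c _ ht).mul_left _)
  · simp only [hF_norm, hF_integral]
    exact ((hasSum_rpow_mul_mittagLeffler hα (add_pos hβ hγ) |c| _ ht).mul_left _).summable

theorem power_law_infusion_fractional_elimination_general (α k₀₁ k : ℝ)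
    (hα : 0 < α) (q : ℝ → ℝ)
    (hq : q = fun t : ℝ =>
      k₀₁ * Real.Gamma α * t ^ α * mittagLeffler α (α + 1) (-(k * t ^ α))) :
    q 0 = 0 ∧
    (∀ t : ℝ, 0 < t → DifferentiableAt ℝ q t) ∧
    (∀ t : ℝ, 0 < t →
      deriv q t = k₀₁ * t ^ (α - 1) -
        k * ((1 / Real.Gamma α) * ∫ τ in (0:ℝ)..t, deriv q τ * (t - τ) ^ (α - 1))) := by
  set C := k₀₁ * Gamma α
  have hq' : q = fun s => C * (s ^ α * mittagLeffler α (α + 1) (-k * s ^ α)) := by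
    simp only [hq, neg_mul, mul_assoc]
  have hderiv : ∀ t, 0 < t →
      HasDerivAt q (C * (t ^ (α - 1) * mittagLeffler α α (-k * t ^ α))) t := fun t ht =>
    hq' ▸ (hasDerivAt_rpow_mul_mittagLeffler hα hα (-k) ht).const_mul C
  refine ⟨by simp [hq, zero_rpow hα.ne'], fun t ht => (hderiv t ht).differentiableAt,
    fun t ht => ?_⟩
  have hcaputo : ∫ τ in (0 : ℝ)..t, deriv q τ * (t - τ) ^ (α - 1)
      = C * (Gamma α * (t ^ (α + α - 1) * mittagLeffler α (α + α) (-k * t ^ α))) := by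
    rw [← integral_rpow_mul_mittagLeffler_mul_rpow hα hα hα (-k) ht,
      ← intervalIntegral.integral_const_mul]
    refine intervalIntegral.integral_congr_ae (Eventually.of_forall fun τ hτ => ?_)
    rw [uIoc_of_le ht.le] at hτ
    rw [(hderiv τ hτ.1).deriv, mul_assoc]
  rw [(hderiv t ht).deriv, hcaputo, mittagLeffler_eq_inv_Gamma_add_mul hα hα,
    show α + α - 1 = (α - 1) + α by ring, rpow_add ht]
  field_simp
  ring

/-- Let 0 < α < 1, k₀₁ > 0, k > 0, and define
`q(t) = k₀₁·Γ(α)·t^α·E_{α,α+1}(-k·t^α)`. Then q(0) = 0, q is differentiable on (0,∞),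
and q solves the one-compartment model with power-law infusion rate `k₀₁·t^{α-1}` and
fractional elimination: for every t > 0,
`q'(t) = k₀₁·t^{α-1} - k · (1/Γ(α)) · ∫_0^t q'(τ)·(t-τ)^{α-1} dτ`. -/
theorem power_law_infusion_fractional_elimination (α k₀₁ k : ℝ)
    (hα : 0 < α) (hα1 : α < 1) (hk₀₁ : 0 < k₀₁) (hk : 0 < k) (q : ℝ → ℝ)
    (hq : q = fun t : ℝ =>
      k₀₁ * Real.Gamma α * t ^ α * mittagLeffler α (α + 1) (-(k * t ^ α))) :
    q 0 = 0 ∧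
    (∀ t : ℝ, 0 < t → DifferentiableAt ℝ q t) ∧
    (∀ t : ℝ, 0 < t →
      deriv q t = k₀₁ * t ^ (α - 1) -
        k * ((1 / Real.Gamma α) * ∫ τ in (0:ℝ)..t, deriv q τ * (t - τ) ^ (α - 1))) :=
  power_law_infusion_fractional_elimination_general α k₀₁ k hα q hq
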